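/- Let J be a finite index set and let d : J → ℤ and m : J → ℤ be families of integers with Σ_{j∈J} d_j·m_j² = 0. Then the function g : ℂ → ℂ defined by g(z) = ∏_{j∈J} σ(m_j·z)^{d_j} (integer powers in ℂ, with the convention that 0 raised to a negative power is 0) is elliptic with respect to Λ: g(z + λ) = g(z) for every z ∈ ℂ and every λ ∈ Λ. -/

import Mathlib

/-!
Writing `q = e^{2πiτ}` and `(w; q)_∞ = ∏ (1 - w qⁿ)`, one has
`σ(z) = (e^{z/2} - e^{-z/2}) (q e^z; q)_∞ (q e^{-z}; q)_∞ / (q; q)_∞²`, and the shift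
`(w; q)_∞ = (1 - w) (q w; q)_∞` gives `σ(z + 2πi) = -σ(z)` and
`σ(z + 2πiτ) = -e^{-z-πiτ} σ(z)`. Iterating, `σ(z + λ) = e^{ℓ(z)} σ(z)` for
`λ = 2πi(a + bτ)` with `ℓ(z) = πi(a + b) - b(z + πibτ)`, and since `m(m - 1)` is even,
`σ(m(z + λ)) = e^{m² ℓ(z)} σ(mz)`. The product therefore picks up the factor
`e^{(∑ dⱼ mⱼ²) ℓ(z)} = 1`.
-/

/-- The nome `q = exp(2πiτ)`. -/
noncomputable def nome (τ : ℂ) : ℂ := Complex.exp (2 * Real.pi * Complex.I * τ)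

/-- The Weierstrass-type sigma function
`σ(z) = (e^{z/2} - e^{-z/2}) ∏_{n ≥ 1} (1 - qⁿ eᶻ)(1 - qⁿ e^{-z})/(1 - qⁿ)²`,
where the product over integers `n ≥ 1` is encoded as a product over `n : ℕ`
with exponent `n + 1`. -/
noncomputable def wsigma (τ : ℂ) (z : ℂ) : ℂ :=
  (Complex.exp (z / 2) - Complex.exp (-z / 2)) *
    ∏' n : ℕ, ((1 - nome τ ^ (n + 1) * Complex.exp z) *
      (1 - nome τ ^ (n + 1) * Complex.exp (-z)) / (1 - nome τ ^ (n + 1)) ^ 2)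

open Complex
open scoped Real

/-- `qPochhammer w q` is `(w; q)_∞`. -/
noncomputable def qPochhammer (w q : ℂ) : ℂ := ∏' n : ℕ, (1 - w * q ^ n)

section qPochhammer

variable {q : ℂ} (hq : ‖q‖ < 1)
include hq

lemma summable_norm_mul_pow (w : ℂ) : Summable fun n : ℕ => ‖w * q ^ n‖ := by
  simpa only [norm_mul, norm_pow] using
    (summable_geometric_of_lt_one (norm_nonneg _) hq).mul_left ‖w‖

lemma multipliable_one_sub_mul_pow (w : ℂ) : Multipliable fun n : ℕ => 1 - w * q ^ n := by
  have hsum : Summable fun n : ℕ => ‖-(w * q ^ n)‖ := by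
    simpa only [norm_neg] using summable_norm_mul_pow hq w
  simpa only [← sub_eq_add_neg] using multipliable_one_add_of_summable hsum

lemma qPochhammer_eq_one_sub_mul (w : ℂ) :
    qPochhammer w q = (1 - w) * qPochhammer (q * w) q := by
  have hshift : Multipliable fun n : ℕ => 1 - w * q ^ (n + 1) :=
    (multipliable_one_sub_mul_pow hq (q * w)).congr fun n => by ring
  rw [qPochhammer, tprod_eq_zero_mul' (f := fun n => 1 - w * q ^ n) hshift, qPochhammer,
    pow_zero, mul_one]
  congr 2 with n
  ring

lemma qPochhammer_self_ne_zero : qPochhammer q q ≠ 0 := by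
  refine tprod_one_add_ne_zero_of_summable (f := fun n => -(q * q ^ n)) (fun n => ?_) ?_
  · rw [← sub_eq_add_neg, sub_ne_zero, ← pow_succ']
    refine fun h => (pow_lt_one₀ (norm_nonneg q) hq n.succ_ne_zero).ne ?_
    rw [← norm_pow, ← h, norm_one]
  · simpa only [norm_neg] using summable_norm_mul_pow hq q

end qPochhammer

lemma norm_nome_lt_one {τ : ℂ} (hτ : 0 < τ.im) : ‖nome τ‖ < 1 :=
  UpperHalfPlane.norm_exp_two_pi_I_lt_one ⟨τ, hτ⟩

lemma wsigma_eq_qPochhammer {τ : ℂ} (hτ : 0 < τ.im) (z : ℂ) :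
    wsigma τ z = (cexp (z / 2) - cexp (-z / 2)) *
      (qPochhammer (nome τ * cexp z) (nome τ) * qPochhammer (nome τ * cexp (-z)) (nome τ) /
        qPochhammer (nome τ) (nome τ) ^ 2) := by
  have hq := norm_nome_lt_one hτ
  have hprod := (((multipliable_one_sub_mul_pow hq (nome τ * cexp z)).hasProd.mul
    (multipliable_one_sub_mul_pow hq (nome τ * cexp (-z))).hasProd).div₀
    ((multipliable_one_sub_mul_pow hq (nome τ)).hasProd.pow 2)
    (pow_ne_zero 2 (qPochhammer_self_ne_zero hq)))
  unfold qPochhammer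
  rw [wsigma, ← hprod.tprod_eq]
  congr 2 with n
  ring

lemma apply_add_int_mul_of_quasiperiodic {f : ℂ → ℂ} {p c k : ℂ}
    (hf : ∀ z, f (z + p) = cexp (c + k * (z + p / 2)) * f z) (n : ℤ) (z : ℂ) :
    f (z + n * p) = cexp (n * c + n * k * (z + n * p / 2)) * f z := by
  induction n using Int.induction_on with
  | zero => simp
  | succ n ih =>
    push_cast at ih ⊢
    rw [show z + (n + 1) * p = z + n * p + p by ring, hf, ih, ← mul_assoc, ← exp_add]
    congr 2
    ring
  | pred n ih =>
    push_cast at ih ⊢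
    set y := z + (-n - 1) * p
    rw [← mul_right_inj' (exp_ne_zero (c + k * (y + p / 2))), ← hf,
      show y + p = z + -n * p by ring, ih, ← mul_assoc, ← exp_add]
    congr 2
    ring

lemma wsigma_add_two_pi_I (τ z : ℂ) : wsigma τ (z + 2 * π * I) = -wsigma τ z := by
  have h1 : cexp ((z + 2 * π * I) / 2) = -cexp (z / 2) := by
    rw [show (z + 2 * π * I) / 2 = z / 2 + π * I by ring]
    exact exp_antiperiodic _
  have h2 : cexp (-(z + 2 * π * I) / 2) = -cexp (-z / 2) := by
    rw [show -(z + 2 * π * I) / 2 = -z / 2 - π * I by ring]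
    exact exp_antiperiodic.sub_eq _
  have h3 : cexp (-(z + 2 * π * I)) = cexp (-z) := by
    rw [show -(z + 2 * π * I) = -z - 2 * π * I by ring]
    exact exp_periodic.sub_eq _
  rw [wsigma, wsigma, h1, h2, exp_periodic z, h3]
  ring

lemma wsigma_add_two_pi_I_mul {τ : ℂ} (hτ : 0 < τ.im) (z : ℂ) :
    wsigma τ (z + 2 * π * I * τ) = -cexp (-(z + π * I * τ)) * wsigma τ z := by
  have hq := norm_nome_lt_one hτ
  have e1 : nome τ * cexp (z + 2 * π * I * τ) = nome τ * (nome τ * cexp z) := by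
    rw [nome, exp_add]; ring
  have e2 : nome τ * cexp (-(z + 2 * π * I * τ)) = cexp (-z) := by
    rw [nome, ← exp_add]; ring_nf
  rw [wsigma_eq_qPochhammer hτ, wsigma_eq_qPochhammer hτ, e1, e2,
    qPochhammer_eq_one_sub_mul hq (nome τ * cexp z), qPochhammer_eq_one_sub_mul hq (cexp (-z))]
  generalize qPochhammer (nome τ * (nome τ * cexp z)) (nome τ) = P
  generalize qPochhammer (nome τ * cexp (-z)) (nome τ) = Q
  generalize qPochhammer (nome τ) (nome τ) = C
  have h1 : cexp ((z + 2 * π * I * τ) / 2) = cexp (z / 2) * cexp (π * I * τ) := by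
    rw [← exp_add]; ring_nf
  have h2 : cexp (-(z + 2 * π * I * τ) / 2) = (cexp (z / 2) * cexp (π * I * τ))⁻¹ := by
    rw [← exp_add, ← exp_neg]; ring_nf
  have h3 : cexp (-z / 2) = (cexp (z / 2))⁻¹ := by rw [← exp_neg]; ring_nf
  have h4 : cexp (-z) = (cexp (z / 2) ^ 2)⁻¹ := by rw [← exp_nat_mul, ← exp_neg]; ring_nf
  have h5 : cexp z = cexp (z / 2) ^ 2 := by rw [← exp_nat_mul]; ring_nf
  have h6 : cexp (-(z + π * I * τ)) = (cexp (z / 2) ^ 2 * cexp (π * I * τ))⁻¹ := by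
    rw [← exp_nat_mul, ← exp_add, ← exp_neg]; ring_nf
  have h7 : nome τ = cexp (π * I * τ) ^ 2 := by rw [nome, ← exp_nat_mul]; ring_nf
  rw [h1, h2, h3, h4, h5, h6, h7]
  field_simp
  ring

lemma wsigma_add_lattice {τ : ℂ} (hτ : 0 < τ.im) (z : ℂ) (a b : ℤ) :
    wsigma τ (z + (2 * π * I * a + 2 * π * I * b * τ)) =
      cexp (π * I * (a + b) - b * (z + π * I * b * τ)) * wsigma τ z := by
  have hA := apply_add_int_mul_of_quasiperiodic (f := wsigma τ) (c := π * I) (k := 0)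
    fun z => by rw [wsigma_add_two_pi_I, zero_mul, add_zero, exp_pi_mul_I, neg_one_mul]
  have hB := apply_add_int_mul_of_quasiperiodic (f := wsigma τ) (c := π * I) (k := -1)
    fun z => by
      rw [wsigma_add_two_pi_I_mul hτ, show π * I + -1 * (z + 2 * π * I * τ / 2) =
        -(z + π * I * τ) + π * I by ring, exp_antiperiodic, neg_mul]
  rw [show z + (2 * π * I * a + 2 * π * I * b * τ) = z + b * (2 * π * I * τ) + a * (2 * π * I)
    by ring, hA, hB, ← mul_assoc, ← exp_add]
  congr 2
  ring

lemma wsigma_int_mul_add_lattice {τ : ℂ} (hτ : 0 < τ.im) (z : ℂ) (a b m : ℤ) :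
    wsigma τ (m * (z + (2 * π * I * a + 2 * π * I * b * τ))) =
      cexp (m ^ 2 * (π * I * (a + b) - b * (z + π * I * b * τ))) * wsigma τ (m * z) := by
  have h := wsigma_add_lattice hτ (m * z) (m * a) (m * b)
  push_cast at h
  rw [show (m : ℂ) * (z + (2 * π * I * a + 2 * π * I * b * τ)) =
    m * z + (2 * π * I * (m * a) + 2 * π * I * (m * b) * τ) by ring, h]
  congr 1
  -- the exponents differ by `π i (a + b) (m - m²)`, and `m (m - 1)` is even
  obtain ⟨k, hk⟩ := Int.even_mul_pred_self m
  have hk' : (m : ℂ) * (m - 1) = k + k := by exact_mod_cast hk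
  rw [exp_eq_exp_iff_exists_int]
  exact ⟨-((a + b) * k), by push_cast; linear_combination (-(π * I * (a + b))) * hk'⟩

theorem prod_wsigma_elliptic (τ : ℂ) (hτ : 0 < τ.im)
    (J : Type*) [Fintype J] (d m : J → ℤ)
    (h : ∑ j : J, d j * (m j) ^ 2 = 0) :
    ∀ (z : ℂ) (a b : ℤ),
      ∏ j : J, wsigma τ ((m j) * (z + (2 * Real.pi * Complex.I * a +
          2 * Real.pi * Complex.I * b * τ))) ^ (d j) =
        ∏ j : J, wsigma τ ((m j) * z) ^ (d j) := by
  intro z a b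
  have hsum : ∀ ℓ : ℂ, ∑ j, (d j : ℂ) * ((m j : ℂ) ^ 2 * ℓ) = 0 := fun ℓ => by
    simp_rw [← mul_assoc, ← Finset.sum_mul]
    exact mul_eq_zero_of_left (by exact_mod_cast h) ℓ
  simp_rw [wsigma_int_mul_add_lattice hτ, mul_zpow, ← exp_int_mul, Finset.prod_mul_distrib,
    ← exp_sum, hsum, exp_zero, one_mul]
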